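/- Let V be a finite-dimensional real inner product space and {Z_λ : λ ∈ Λ} a family of subspaces of V. Then the intersection over λ of the subalgebras C(Z_λ) of the Clifford algebra C(V) equals C(⋂_λ Z_λ), the subalgebra generated by the intersection of the subspaces. -/

import Mathlib

/-!
Twisted duality in the form "`x ∈ C(Z)` iff every `u ∈ Zᗮ` satisfies `u γ(x) = x u`" reduces the
claim to `(⋂ Zₗ)ᗮ = ⨆ Zₗᗮ`, because the vectors `u` with `u γ(x) = x u` form a subspace.
For the nontrivial half of duality, pick a unit vector `u ∈ W ∩ Zᗮ`: every element of `C(W)` is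
`a + b u` with `a, b ∈ C(W ∩ uᗮ)`, and `u γ(x) = x u` forces `b = 0`. Starting from `W = V`, this
pushes `x` down into `C(Z)` one dimension at a time.
-/

open CliffordAlgebra InnerProductSpace

namespace CliffordAlgebra

variable {R M : Type*} [CommRing R] [AddCommGroup M] [Module R M] {Q : QuadraticForm R M}

theorem involute_mem_adjoin_ι_image {s : Set M} {x : CliffordAlgebra Q}
    (hx : x ∈ Algebra.adjoin R (ι Q '' s)) : involute x ∈ Algebra.adjoin R (ι Q '' s) := by
  induction hx using Algebra.adjoin_induction with
  | mem y hy =>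
    obtain ⟨z, hz, rfl⟩ := hy
    rw [involute_ι]
    exact neg_mem (Algebra.subset_adjoin ⟨z, hz, rfl⟩)
  | algebraMap r => rw [AlgHom.commutes]; exact Subalgebra.algebraMap_mem _ r
  | add a b _ _ ha hb => rw [map_add]; exact add_mem ha hb
  | mul a b _ _ ha hb => rw [map_mul]; exact mul_mem ha hb

theorem ι_mul_eq_involute_mul_ι {s : Set M} {u : M} (hu : ∀ z ∈ s, Q.IsOrtho u z)
    {x : CliffordAlgebra Q} (hx : x ∈ Algebra.adjoin R (ι Q '' s)) :
    ι Q u * x = involute x * ι Q u := by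
  induction hx using Algebra.adjoin_induction with
  | mem y hy =>
    obtain ⟨z, hz, rfl⟩ := hy
    rw [involute_ι, ι_mul_ι_comm_of_isOrtho (hu z hz), neg_mul]
  | algebraMap r => rw [AlgHom.commutes, Algebra.commutes]
  | add a b _ _ ha hb => rw [mul_add, ha, hb, map_add, add_mul]
  | mul a b _ _ ha hb => rw [← mul_assoc, ha, mul_assoc, hb, ← mul_assoc, map_mul]

theorem ι_mul_involute_eq_mul_ι {s : Set M} {u : M} (hu : ∀ z ∈ s, Q.IsOrtho u z)
    {x : CliffordAlgebra Q} (hx : x ∈ Algebra.adjoin R (ι Q '' s)) :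
    ι Q u * involute x = x * ι Q u := by
  simpa using ι_mul_eq_involute_mul_ι hu (involute_mem_adjoin_ι_image hx)

/-- The vectors in the graded commutant of `x`, `γ = involute` being the grading automorphism. -/
def superCommutingVectors (x : CliffordAlgebra Q) : Submodule R M where
  carrier := {u | ι Q u * involute x = x * ι Q u}
  add_mem' {a b} ha hb := by
    simp only [Set.mem_ofPred_eq, map_add, add_mul, mul_add] at ha hb ⊢
    rw [ha, hb]
  zero_mem' := by simp
  smul_mem' c a ha := by
    simp only [Set.mem_ofPred_eq, map_smul, smul_mul_assoc, mul_smul_comm] at ha ⊢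
    rw [ha]

theorem mem_superCommutingVectors {x : CliffordAlgebra Q} {u : M} :
    u ∈ superCommutingVectors x ↔ ι Q u * involute x = x * ι Q u :=
  Iff.rfl

end CliffordAlgebra

theorem Submodule.orthogonal_iInf {𝕜 E ι : Type*} [RCLike 𝕜] [NormedAddCommGroup E]
    [InnerProductSpace 𝕜 E] [FiniteDimensional 𝕜 E] (K : ι → Submodule 𝕜 E) :
    (⨅ i, K i)ᗮ = ⨆ i, (K i)ᗮ := by
  rw [← Submodule.orthogonal_orthogonal (⨆ i, (K i)ᗮ), ← Submodule.iInf_orthogonal]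
  simp only [Submodule.orthogonal_orthogonal]

theorem Submodule.exists_mem_real_inner_self_eq_one {E : Type*} [NormedAddCommGroup E]
    [InnerProductSpace ℝ E] {K : Submodule ℝ E} (hK : K ≠ ⊥) : ∃ u ∈ K, ⟪u, u⟫_ℝ = 1 := by
  obtain ⟨v, hvK, hv0⟩ := Submodule.exists_mem_ne_zero_of_ne_bot hK
  refine ⟨‖v‖⁻¹ • v, K.smul_mem _ hvK, ?_⟩
  rw [real_inner_smul_left, real_inner_smul_right, real_inner_self_eq_norm_sq]
  field_simp

namespace CliffordAlgebra

variable {V : Type*} [NormedAddCommGroup V] [InnerProductSpace ℝ V] {Q : QuadraticForm ℝ V}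

theorem isOrtho_of_inner_eq_zero (hQ : ∀ v : V, Q v = ⟪v, v⟫_ℝ) {u v : V} (h : ⟪u, v⟫_ℝ = 0) :
    Q.IsOrtho u v := by
  rw [QuadraticMap.isOrtho_def, hQ, hQ, hQ, real_inner_add_add_self, h]
  ring

theorem orthogonal_le_superCommutingVectors (hQ : ∀ v : V, Q v = ⟪v, v⟫_ℝ) {Z : Submodule ℝ V}
    {x : CliffordAlgebra Q} (hx : x ∈ Algebra.adjoin ℝ (ι Q '' (Z : Set V))) :
    Zᗮ ≤ superCommutingVectors x := fun _ hu =>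
  ι_mul_involute_eq_mul_ι
    (fun _ hz => isOrtho_of_inner_eq_zero hQ (Submodule.inner_left_of_mem_orthogonal hz hu)) hx

theorem isOrtho_of_mem_orthogonal_singleton (hQ : ∀ v : V, Q v = ⟪v, v⟫_ℝ) {u z : V}
    (hz : z ∈ (ℝ ∙ u)ᗮ) : Q.IsOrtho u z :=
  isOrtho_of_inner_eq_zero hQ (Submodule.mem_orthogonal_singleton_iff_inner_right.mp hz)

theorem ι_mul_ι_self_of_inner_self_eq_one (hQ : ∀ v : V, Q v = ⟪v, v⟫_ℝ) {u : V}
    (hu : ⟪u, u⟫_ℝ = 1) : ι Q u * ι Q u = 1 := by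
  rw [ι_sq_scalar, hQ, hu, map_one]

theorem exists_eq_add_mul_ι_of_mem_adjoin (hQ : ∀ v : V, Q v = ⟪v, v⟫_ℝ) {W : Submodule ℝ V}
    {u : V} (huW : u ∈ W) (hu : ⟪u, u⟫_ℝ = 1) {y : CliffordAlgebra Q}
    (hy : y ∈ Algebra.adjoin ℝ (ι Q '' (W : Set V))) :
    ∃ a ∈ Algebra.adjoin ℝ (ι Q '' ((W ⊓ (ℝ ∙ u)ᗮ : Submodule ℝ V) : Set V)),
    ∃ b ∈ Algebra.adjoin ℝ (ι Q '' ((W ⊓ (ℝ ∙ u)ᗮ : Submodule ℝ V) : Set V)),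
      y = a + b * ι Q u := by
  have hperp : ∀ z ∈ ((W ⊓ (ℝ ∙ u)ᗮ : Submodule ℝ V) : Set V), Q.IsOrtho u z := fun _ hz =>
    isOrtho_of_mem_orthogonal_singleton hQ hz.2
  induction hy using Algebra.adjoin_induction with
  | mem y hy =>
    obtain ⟨w, hw, rfl⟩ := hy
    refine ⟨ι Q (w - ⟪u, w⟫_ℝ • u), Algebra.subset_adjoin ⟨_, ⟨?_, ?_⟩, rfl⟩,
      algebraMap ℝ _ ⟪u, w⟫_ℝ, Subalgebra.algebraMap_mem _ _, ?_⟩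
    · exact W.sub_mem hw (W.smul_mem _ huW)
    · rw [SetLike.mem_coe, Submodule.mem_orthogonal_singleton_iff_inner_right, inner_sub_right,
        real_inner_smul_right, hu, mul_one, sub_self]
    · rw [map_sub, map_smul, Algebra.smul_def, sub_add_cancel]
  | algebraMap r =>
    exact ⟨algebraMap ℝ _ r, Subalgebra.algebraMap_mem _ _, 0, zero_mem _, by simp⟩
  | add y z _ _ hy hz =>
    obtain ⟨a, ha, b, hb, rfl⟩ := hy
    obtain ⟨c, hc, d, hd, rfl⟩ := hz
    exact ⟨a + c, add_mem ha hc, b + d, add_mem hb hd, by noncomm_ring⟩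
  | mul y z _ _ hy hz =>
    obtain ⟨a, ha, b, hb, rfl⟩ := hy
    obtain ⟨c, hc, d, hd, rfl⟩ := hz
    refine ⟨a * c + b * involute d,
      add_mem (mul_mem ha hc) (mul_mem hb (involute_mem_adjoin_ι_image hd)),
      a * d + b * involute c,
      add_mem (mul_mem ha hd) (mul_mem hb (involute_mem_adjoin_ι_image hc)), ?_⟩
    calc (a + b * ι Q u) * (c + d * ι Q u)
        = a * c + a * d * ι Q u + b * (ι Q u * c) + b * (ι Q u * d) * ι Q u := by noncomm_ring
      _ = a * c + a * d * ι Q u + b * (involute c * ι Q u)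
            + b * involute d * (ι Q u * ι Q u) := by
          rw [ι_mul_eq_involute_mul_ι hperp hc, ι_mul_eq_involute_mul_ι hperp hd]; noncomm_ring
      _ = _ := by rw [ι_mul_ι_self_of_inner_self_eq_one hQ hu]; noncomm_ring

theorem mem_adjoin_inf_orthogonal_singleton (hQ : ∀ v : V, Q v = ⟪v, v⟫_ℝ) {W : Submodule ℝ V}
    {u : V} (huW : u ∈ W) (hu : ⟪u, u⟫_ℝ = 1) {x : CliffordAlgebra Q}
    (hx : x ∈ Algebra.adjoin ℝ (ι Q '' (W : Set V))) (hxu : u ∈ superCommutingVectors x) :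
    x ∈ Algebra.adjoin ℝ (ι Q '' ((W ⊓ (ℝ ∙ u)ᗮ : Submodule ℝ V) : Set V)) := by
  have hperp : ∀ z ∈ ((W ⊓ (ℝ ∙ u)ᗮ : Submodule ℝ V) : Set V), Q.IsOrtho u z := fun _ hz =>
    isOrtho_of_mem_orthogonal_singleton hQ hz.2
  have hsq := ι_mul_ι_self_of_inner_self_eq_one hQ hu
  obtain ⟨a, ha, b, hb, rfl⟩ := exists_eq_add_mul_ι_of_mem_adjoin hQ huW hu hx
  have hL : ι Q u * involute (a + b * ι Q u) = a * ι Q u - b := by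
    rw [map_add, map_mul, involute_ι, mul_add, ι_mul_involute_eq_mul_ι hperp ha, mul_neg, mul_neg,
      ← mul_assoc, ι_mul_involute_eq_mul_ι hperp hb, mul_assoc, hsq, mul_one, sub_eq_add_neg]
  have hR : (a + b * ι Q u) * ι Q u = a * ι Q u + b := by rw [add_mul, mul_assoc, hsq, mul_one]
  have hb0 : b = 0 := by
    rw [mem_superCommutingVectors, hL, hR, sub_eq_add_neg, add_right_inj] at hxu
    have h2b : (2 : ℝ) • b = 0 := by rw [two_smul]; nth_rewrite 1 [← hxu]; exact neg_add_cancel b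
    exact (smul_eq_zero.mp h2b).resolve_left two_ne_zero
  rwa [hb0, zero_mul, add_zero]

theorem mem_adjoin_of_orthogonal_le [FiniteDimensional ℝ V] (hQ : ∀ v : V, Q v = ⟪v, v⟫_ℝ)
    {Z : Submodule ℝ V} {x : CliffordAlgebra Q} (hZx : Zᗮ ≤ superCommutingVectors x) :
    x ∈ Algebra.adjoin ℝ (ι Q '' (Z : Set V)) := by
  suffices ∀ W : Submodule ℝ V, Z ≤ W → x ∈ Algebra.adjoin ℝ (ι Q '' (W : Set V)) →
      x ∈ Algebra.adjoin ℝ (ι Q '' (Z : Set V)) from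
    this ⊤ le_top (by rw [Submodule.top_coe, Set.image_univ, adjoin_range_ι]; trivial)
  intro W
  induction W using WellFoundedLT.induction with
  | ind W ih =>
  intro hZW hxW
  by_cases hW : Zᗮ ⊓ W = ⊥
  · rwa [← Submodule.sup_orthogonal_inf_of_hasOrthogonalProjection hZW, hW, sup_bot_eq] at hxW
  obtain ⟨u, ⟨huZ, huW⟩, hu⟩ := Submodule.exists_mem_real_inner_self_eq_one hW
  refine ih _ (inf_lt_left.mpr fun h => ?_) (le_inf hZW ?_)
    (mem_adjoin_inf_orthogonal_singleton hQ huW hu hxW (hZx huZ))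
  · exact one_ne_zero
      (hu.symm.trans (Submodule.mem_orthogonal_singleton_iff_inner_right.mp (h huW)))
  · exact fun z hz => Submodule.mem_orthogonal_singleton_iff_inner_left.mpr
      (Submodule.inner_right_of_mem_orthogonal hz huZ)

theorem mem_adjoin_iff_orthogonal_le [FiniteDimensional ℝ V] (hQ : ∀ v : V, Q v = ⟪v, v⟫_ℝ)
    {Z : Submodule ℝ V} {x : CliffordAlgebra Q} :
    x ∈ Algebra.adjoin ℝ (ι Q '' (Z : Set V)) ↔ Zᗮ ≤ superCommutingVectors x :=
  ⟨orthogonal_le_superCommutingVectors hQ, mem_adjoin_of_orthogonal_le hQ⟩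

end CliffordAlgebra

theorem stmt14 {V : Type*} [NormedAddCommGroup V] [InnerProductSpace ℝ V]
    [FiniteDimensional ℝ V] (Q : QuadraticForm ℝ V) (hQ : ∀ v : V, Q v = ⟪v, v⟫_ℝ)
    {Λ : Type*} (Z : Λ → Submodule ℝ V) :
    (⋂ l : Λ, (Algebra.adjoin ℝ (ι Q '' (Z l : Set V)) : Set (CliffordAlgebra Q))) =
      (Algebra.adjoin ℝ (ι Q '' ((⨅ l : Λ, Z l : Submodule ℝ V) : Set V)) : Set (CliffordAlgebra Q)) := by
  ext x
  simp only [Set.mem_iInter, SetLike.mem_coe, mem_adjoin_iff_orthogonal_le hQ,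
    Submodule.orthogonal_iInf, iSup_le_iff]
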